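/- arXiv:0803.3270 — 2 statements merged into one kernel-verified Lean document; each statement's English description precedes it below -/
import Mathlib

section
/- Let r be a nonnegative function on pairs of coprime positive integers (p,q) with p < q such that ∑_{(p,q)} r(p,q)/((p+q)q) < ∞. Define l_r(ξ) := ∑_{i=0}^∞ r(q_i(ξ), q_{i+1}(ξ)) for ξ ∈ (0,1/2] irrational. Then l_r is integrable on (0,1/2] and ∫_0^{1/2} l_r(ξ) dξ = ∑_{p/q ∈ (0,1), gcd(p,q)=1, p<q} r(p,q)/((p+q)·q). -/
/-!
For irrational `ξ ∈ (0, 1/2]` the word `[a₁, …, a_{i+1}]` of its first partial quotients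
determines `(q_i, q_{i+1})`, so `r(q_i(ξ), q_{i+1}(ξ))` is constant on the cylinder of each such
word. For fixed `i` these cylinders partition `(0, 1/2]` up to the rationals, and the cylinder of
a word with convergents `p'/q'`, `p/q` is the interval between `p/q` and `(p + p')/(q + q')`, of
length `1 / ((q' + q) q)` because `q p' - q' p = ±1`. Summing over `i` by monotone convergence
gives a sum over all words with `a₁ ≥ 2`, and the Euclidean algorithm shows that `(q', q)` runs
exactly once over every coprime pair `p < q` as the word runs over these.
-/

open MeasureTheory

/-- The Gauss map `x ↦ {1/x}`. -/
noncomputable def gaussMap (x : ℝ) : ℝ := Int.fract x⁻¹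

/-- `partQuotN ξ i = a_{i+1}(ξ)`, the `(i+1)`-st partial quotient of the
continued fraction of `ξ ∈ (0,1)`. -/
noncomputable def partQuotN (ξ : ℝ) (i : ℕ) : ℕ := (⌊(gaussMap^[i] ξ)⁻¹⌋).toNat

/-- Denominators of the continued fraction convergents of `ξ ∈ (0,1)`:
`q_0 = 1`, `q_1 = a_1`, `q_{i+2} = a_{i+2} q_{i+1} + q_i`. -/
noncomputable def convDen (ξ : ℝ) : ℕ → ℕ
  | 0 => 1
  | 1 => partQuotN ξ 0
  | (i + 2) => partQuotN ξ (i + 1) * convDen ξ (i + 1) + convDen ξ i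

/-- The Lévy function `l_r(ξ) = ∑_{i≥0} r(q_i(ξ), q_{i+1}(ξ))`. -/
noncomputable def levyFn (r : ℕ → ℕ → ℝ) (ξ : ℝ) : ℝ :=
  ∑' i : ℕ, r (convDen ξ i) (convDen ξ (i + 1))

/-- Coprime pairs `(p,q)` of positive integers with `p < q`. -/
def CoprimePairs : Type :=
  {x : ℕ × ℕ // 0 < x.1 ∧ x.1 < x.2 ∧ Nat.Coprime x.1 x.2}


open Set

namespace CFList

/-- For `l = [a₁, …, aₙ]`, `cfMat l = ((qₙ, qₙ₋₁), (pₙ, pₙ₋₁))`, where `pₖ / qₖ` are the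
convergents of `[0; a₁, …, aₙ]`; prepending `a` multiplies by `!![a, 1; 1, 0]` on the left. -/
def cfMat : List ℕ → (ℕ × ℕ) × (ℕ × ℕ)
  | [] => ((1, 0), (0, 1))
  | a :: l =>
    ((a * (cfMat l).1.1 + (cfMat l).2.1, a * (cfMat l).1.2 + (cfMat l).2.2),
      ((cfMat l).1.1, (cfMat l).1.2))

def den (l : List ℕ) : ℕ := (cfMat l).1.1
def denPrev (l : List ℕ) : ℕ := (cfMat l).1.2
def num (l : List ℕ) : ℕ := (cfMat l).2.1
def numPrev (l : List ℕ) : ℕ := (cfMat l).2.2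

@[simp] lemma den_nil : den [] = 1 := rfl
@[simp] lemma denPrev_nil : denPrev [] = 0 := rfl
@[simp] lemma num_nil : num [] = 0 := rfl
@[simp] lemma numPrev_nil : numPrev [] = 1 := rfl
@[simp] lemma den_cons (a : ℕ) (l : List ℕ) : den (a :: l) = a * den l + num l := rfl
@[simp] lemma denPrev_cons (a : ℕ) (l : List ℕ) :
    denPrev (a :: l) = a * denPrev l + numPrev l := rfl
@[simp] lemma num_cons (a : ℕ) (l : List ℕ) : num (a :: l) = den l := rfl
@[simp] lemma numPrev_cons (a : ℕ) (l : List ℕ) : numPrev (a :: l) = denPrev l := rfl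

lemma cfMat_append_singleton (l : List ℕ) (a : ℕ) :
    cfMat (l ++ [a]) = ((a * den l + denPrev l, den l), (a * num l + numPrev l, num l)) := by
  induction l with
  | nil => simp [cfMat, den, denPrev, num, numPrev]
  | cons b l ih =>
    simp only [List.cons_append, cfMat, ih]
    simp only [den, denPrev, num, numPrev, cfMat, Prod.mk.injEq]
    exact ⟨⟨by ring, trivial⟩, trivial⟩

@[simp] lemma den_append_singleton (l : List ℕ) (a : ℕ) :
    den (l ++ [a]) = a * den l + denPrev l := by
  rw [den, cfMat_append_singleton]

@[simp] lemma denPrev_append_singleton (l : List ℕ) (a : ℕ) :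
    denPrev (l ++ [a]) = den l := by
  rw [denPrev, cfMat_append_singleton]

lemma den_mul_numPrev_sub_denPrev_mul_num (l : List ℕ) :
    (den l : ℤ) * numPrev l - denPrev l * num l = (-1) ^ l.length := by
  induction l with
  | nil => simp
  | cons a l ih =>
    simp only [den_cons, denPrev_cons, num_cons, numPrev_cons, List.length_cons, pow_succ]
    push_cast
    linear_combination (-1 : ℤ) * ih

lemma coprime_denPrev_den (l : List ℕ) : Nat.Coprime (denPrev l) (den l) := by
  rw [← Nat.isCoprime_iff_coprime]
  refine ⟨-(-1) ^ l.length * num l, (-1) ^ l.length * numPrev l, ?_⟩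
  have hsq : ((-1 : ℤ) ^ l.length) ^ 2 = 1 := by rw [← pow_mul, mul_comm, pow_mul]; simp
  linear_combination (-1) ^ l.length * den_mul_numPrev_sub_denPrev_mul_num l + hsq

lemma den_pos {l : List ℕ} (h : ∀ a ∈ l, 1 ≤ a) : 0 < den l := by
  induction l with
  | nil => simp
  | cons a l ih =>
    simp only [List.mem_cons, forall_eq_or_imp] at h
    simp only [den_cons]
    nlinarith [ih h.2]

/-- The words `[a₁, …, aₙ]` of first partial quotients of irrational numbers in `(0, 1/2]`. -/
def Admissible (l : List ℕ) : Prop := (∀ a ∈ l, 1 ≤ a) ∧ ∀ a ∈ l.head?, 2 ≤ a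

lemma admissible_append_singleton {l : List ℕ} {a : ℕ} :
    Admissible (l ++ [a]) ↔ Admissible l ∧ 1 ≤ a ∧ (l = [] → 2 ≤ a) := by
  cases l with
  | nil => simp [Admissible]
  | cons b l => simp [Admissible, or_imp, forall_and]; tauto

lemma denPrev_pos {l : List ℕ} (h : ∀ a ∈ l, 1 ≤ a) (hl : l ≠ []) : 0 < denPrev l := by
  obtain ⟨l₀, a, rfl⟩ := (List.eq_nil_or_concat' l).resolve_left hl
  simpa using den_pos fun b hb => h b (List.mem_append_left _ hb)

lemma denPrev_lt_den {l : List ℕ} (h : Admissible l) : denPrev l < den l := by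
  obtain rfl | ⟨l₀, a, rfl⟩ := List.eq_nil_or_concat' l
  · simp
  obtain ⟨hl₀, ha, hnil⟩ := admissible_append_singleton.1 h
  obtain rfl | hne := eq_or_ne l₀ []
  · have := hnil rfl
    simp only [den_append_singleton, denPrev_append_singleton, den_nil, denPrev_nil]
    omega
  have := denPrev_pos hl₀.1 hne
  simp only [den_append_singleton, denPrev_append_singleton]
  nlinarith

private lemma eq_of_mul_add_eq_mul_add {a b u v Q : ℕ} (hu : u < Q) (hv : v < Q)
    (h : a * Q + u = b * Q + v) : a = b ∧ u = v := by
  have hQ : 0 < Q := by omega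
  obtain ⟨ha, hu'⟩ := (Nat.div_mod_unique (a := a * Q + u) (d := a) (c := u) hQ).2 ⟨by ring, hu⟩
  obtain ⟨hb, hv'⟩ :=
    (Nat.div_mod_unique (a := a * Q + u) (d := b) (c := v) hQ).2 ⟨by rw [h]; ring, hv⟩
  exact ⟨ha.symm.trans hb, hu'.symm.trans hv'⟩

/-- The reversed word is recovered from `(qₙ₋₁, qₙ)` by the Euclidean algorithm. -/
theorem eq_of_denPrev_eq_of_den_eq {l m : List ℕ} (hl : Admissible l) (hm : Admissible m)
    (h' : denPrev l = denPrev m) (h : den l = den m) : l = m := by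
  induction l using List.reverseRecOn generalizing m with
  | nil =>
    by_contra hne
    exact (denPrev_pos hm.1 (Ne.symm hne)).ne' h'.symm
  | append_singleton l₀ a ih =>
    have hl₀ := (admissible_append_singleton.1 hl).1
    obtain rfl | ⟨m₀, b, rfl⟩ := List.eq_nil_or_concat' m
    · exact absurd h' (denPrev_pos hl.1 (by simp)).ne'
    have hm₀ := (admissible_append_singleton.1 hm).1
    simp only [den_append_singleton, denPrev_append_singleton] at h h'
    rw [h'] at h
    obtain ⟨rfl, hprev⟩ :=
      eq_of_mul_add_eq_mul_add (h' ▸ denPrev_lt_den hl₀) (denPrev_lt_den hm₀) h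
    rw [ih hl₀ hm₀ hprev h']

theorem exists_admissible_of_coprime {p q : ℕ} (hpq : p < q) (hco : Nat.Coprime p q) :
    ∃ l, Admissible l ∧ denPrev l = p ∧ den l = q := by
  induction q using Nat.strong_induction_on generalizing p with
  | _ q ih =>
    obtain rfl | hp := Nat.eq_zero_or_pos p
    · exact ⟨[], by simp [Admissible], rfl, (Nat.coprime_zero_left q).1 hco |>.symm⟩
    have hrem : Nat.Coprime (q % p) p := by rw [Nat.Coprime, ← Nat.gcd_rec]; exact hco
    obtain ⟨l₀, hl₀, hprev, hden⟩ := ih p hpq (Nat.mod_lt q hp) hrem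
    refine ⟨l₀ ++ [q / p], admissible_append_singleton.2 ⟨hl₀, Nat.div_pos hpq.le hp, ?_⟩,
      by simp [hden], by simp [hprev, hden, Nat.div_add_mod']⟩
    rintro rfl
    simp only [den_nil] at hden
    subst hden
    simp only [Nat.div_one]
    omega

abbrev AdmissibleWord : Type := {l : List ℕ // Admissible l ∧ l ≠ []}

def toCoprimePair (l : AdmissibleWord) : CoprimePairs :=
  ⟨(denPrev l.1, den l.1), denPrev_pos l.2.1.1 l.2.2, denPrev_lt_den l.2.1,
    coprime_denPrev_den l.1⟩

lemma toCoprimePair_bijective : Function.Bijective toCoprimePair := by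
  refine ⟨fun l m h => ?_, fun ⟨(p, q), hp, hpq, hco⟩ => ?_⟩
  · have h' := congrArg Subtype.val h
    simp only [toCoprimePair, Prod.mk.injEq] at h'
    exact Subtype.ext (eq_of_denPrev_eq_of_den_eq l.2.1 m.2.1 h'.1 h'.2)
  · obtain ⟨l, hl, rfl, rfl⟩ := exists_admissible_of_coprime hpq hco
    exact ⟨⟨l, hl, by rintro rfl; simp at hp⟩, rfl⟩

noncomputable def leftEnd (l : List ℕ) : ℝ := num l / den l

noncomputable def rightEnd (l : List ℕ) : ℝ := (num l + numPrev l) / (den l + denPrev l)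

lemma leftEnd_cons (a : ℕ) {t : List ℕ} (ht : ∀ b ∈ t, 1 ≤ b) :
    leftEnd (a :: t) = (a + leftEnd t)⁻¹ := by
  have := den_pos ht
  simp only [leftEnd, num_cons, den_cons]
  field_simp
  push_cast
  ring

lemma rightEnd_cons (a : ℕ) {t : List ℕ} (ht : ∀ b ∈ t, 1 ≤ b) :
    rightEnd (a :: t) = (a + rightEnd t)⁻¹ := by
  have := den_pos ht
  simp only [rightEnd, num_cons, numPrev_cons, den_cons, denPrev_cons]
  field_simp
  push_cast
  ring

lemma inv_add_mem_Icc {a : ℕ} (ha : 1 ≤ a) {x : ℝ} (hx : x ∈ Icc 0 1) :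
    ((a : ℝ) + x)⁻¹ ∈ Icc 0 1 := by
  have ha' : (1 : ℝ) ≤ a := by exact_mod_cast ha
  exact ⟨inv_nonneg.2 (by linarith [hx.1]), inv_le_one_of_one_le₀ (by linarith [hx.1])⟩

lemma leftEnd_mem_Icc {l : List ℕ} (h : ∀ a ∈ l, 1 ≤ a) : leftEnd l ∈ Icc 0 1 := by
  induction l with
  | nil => simp [leftEnd]
  | cons a t ih =>
    simp only [List.mem_cons, forall_eq_or_imp] at h
    rw [leftEnd_cons a h.2]
    exact inv_add_mem_Icc h.1 (ih h.2)

lemma rightEnd_mem_Icc {l : List ℕ} (h : ∀ a ∈ l, 1 ≤ a) : rightEnd l ∈ Icc 0 1 := by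
  induction l with
  | nil => simp [rightEnd]
  | cons a t ih =>
    simp only [List.mem_cons, forall_eq_or_imp] at h
    rw [rightEnd_cons a h.2]
    exact inv_add_mem_Icc h.1 (ih h.2)

lemma abs_leftEnd_sub_rightEnd {l : List ℕ} (h : ∀ a ∈ l, 1 ≤ a) :
    |leftEnd l - rightEnd l| = 1 / ((denPrev l + den l) * den l) := by
  have hq := den_pos h
  have hdet : ((den l : ℝ) * numPrev l - denPrev l * num l) = (-1) ^ l.length := by
    exact_mod_cast den_mul_numPrev_sub_denPrev_mul_num l
  have hsub : leftEnd l - rightEnd l = -(-1) ^ l.length / ((denPrev l + den l) * den l) := by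
    rw [leftEnd, rightEnd, ← hdet]
    field_simp
    ring
  rw [hsub, abs_div, abs_neg, abs_pow, abs_neg, abs_one, one_pow,
    abs_of_pos (by positivity)]


end CFList

open CFList

lemma irrational_gaussMap_iff {ξ : ℝ} : Irrational (gaussMap ξ) ↔ Irrational ξ := by
  rw [gaussMap, Int.fract, irrational_sub_intCast_iff, irrational_inv_iff]

lemma gaussMap_mem_Ioo {ξ : ℝ} (h : Irrational ξ) : gaussMap ξ ∈ Ioo 0 1 :=
  ⟨(Int.fract_nonneg _).lt_of_ne (irrational_gaussMap_iff.2 h).ne_zero.symm, Int.fract_lt_one _⟩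

lemma partQuotN_zero (ξ : ℝ) : partQuotN ξ 0 = ⌊ξ⁻¹⌋.toNat := rfl

lemma partQuotN_succ (ξ : ℝ) (k : ℕ) : partQuotN ξ (k + 1) = partQuotN (gaussMap ξ) k := by
  simp only [partQuotN, Function.iterate_succ_apply]

lemma one_le_partQuotN {ξ : ℝ} (h : Irrational ξ) (hξ : ξ ∈ Ioo 0 1) (k : ℕ) :
    1 ≤ partQuotN ξ k := by
  induction k generalizing ξ with
  | zero =>
    have : 1 ≤ ξ⁻¹ := one_le_inv₀ hξ.1 |>.2 hξ.2.le
    rw [partQuotN_zero, Int.floor_toNat, Nat.one_le_iff_ne_zero, ← Nat.pos_iff_ne_zero,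
      Nat.floor_pos]
    exact this
  | succ k ih =>
    rw [partQuotN_succ]
    exact ih (irrational_gaussMap_iff.2 h) (gaussMap_mem_Ioo h)

lemma two_le_partQuotN_zero_iff {ξ : ℝ} (hξ : 0 < ξ) : 2 ≤ partQuotN ξ 0 ↔ ξ ≤ 1 / 2 := by
  rw [partQuotN_zero, Int.floor_toNat, Nat.le_floor_iff (inv_nonneg.2 hξ.le), one_div,
    Nat.cast_ofNat, le_inv_comm₀ two_pos hξ]

noncomputable def partQuots (ξ : ℝ) (n : ℕ) : List ℕ := (List.range n).map (partQuotN ξ)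

@[simp] lemma length_partQuots (ξ : ℝ) (n : ℕ) : (partQuots ξ n).length = n := by
  simp [partQuots]

lemma partQuots_succ (ξ : ℝ) (n : ℕ) :
    partQuots ξ (n + 1) = partQuotN ξ 0 :: partQuots (gaussMap ξ) n := by
  simp [partQuots, List.range_succ_eq_map, partQuotN_succ]

lemma partQuots_succ_eq_append (ξ : ℝ) (n : ℕ) :
    partQuots ξ (n + 1) = partQuots ξ n ++ [partQuotN ξ n] := by
  simp [partQuots, List.range_succ]

lemma den_partQuots (ξ : ℝ) (n : ℕ) :
    den (partQuots ξ (n + 1)) = convDen ξ (n + 1) ∧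
      denPrev (partQuots ξ (n + 1)) = convDen ξ n := by
  induction n with
  | zero => simp [partQuots, convDen]
  | succ n ih =>
    rw [partQuots_succ_eq_append ξ (n + 1), den_append_singleton, denPrev_append_singleton, ih.1, ih.2]
    exact ⟨rfl, rfl⟩

lemma admissible_partQuots {ξ : ℝ} (h : Irrational ξ) (hξ : ξ ∈ Ioc 0 (1 / 2)) (n : ℕ) :
    Admissible (partQuots ξ n) := by
  have hξ' : ξ ∈ Ioo 0 1 := ⟨hξ.1, hξ.2.trans_lt (by norm_num)⟩
  refine ⟨by simpa [partQuots] using fun k _ => one_le_partQuotN h hξ' k, ?_⟩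
  cases n with
  | zero => simp [partQuots]
  | succ n => simpa [partQuots_succ] using (two_le_partQuotN_zero_iff hξ.1).2 hξ.2

def cfCylinder (l : List ℕ) : Set ℝ :=
  {ξ | Irrational ξ ∧ ξ ∈ Ioo 0 1 ∧ partQuots ξ l.length = l}

lemma mem_cfCylinder_cons {a : ℕ} {t : List ℕ} {ξ : ℝ} :
    ξ ∈ cfCylinder (a :: t) ↔
      ξ ∈ Ioo 0 1 ∧ ⌊ξ⁻¹⌋.toNat = a ∧ gaussMap ξ ∈ cfCylinder t := by
  simp only [cfCylinder, mem_ofPred_eq, List.length_cons, partQuots_succ, List.cons.injEq,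
    partQuotN_zero, irrational_gaussMap_iff]
  constructor
  · rintro ⟨h, hξ, ha, ht⟩
    exact ⟨hξ, ha, h, gaussMap_mem_Ioo h, ht⟩
  · rintro ⟨hξ, ha, h, -, ht⟩
    exact ⟨h, hξ, ha, ht⟩

lemma cfCylinder_subset_Ioc {l : List ℕ} (hl : Admissible l) (hne : l ≠ []) :
    cfCylinder l ⊆ Ioc 0 (1 / 2) := by
  obtain ⟨a, t, rfl⟩ := List.exists_cons_of_ne_nil hne
  intro ξ hξ
  obtain ⟨hIoo, rfl, -⟩ := mem_cfCylinder_cons.1 hξ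
  exact ⟨hIoo.1, (two_le_partQuotN_zero_iff hIoo.1).1 (hl.2 _ rfl)⟩

lemma Ioc_inter_irrational_eq_iUnion_cfCylinder (i : ℕ) :
    Ioc (0 : ℝ) (1 / 2) ∩ {ξ | Irrational ξ} =
      ⋃ l : {l : AdmissibleWord // l.1.length - 1 = i}, cfCylinder l.1.1 := by
  ext ξ
  simp only [mem_inter_iff, mem_ofPred_eq, mem_iUnion]
  constructor
  · rintro ⟨hξ, h⟩
    refine ⟨⟨⟨partQuots ξ (i + 1), admissible_partQuots h hξ _, ?_⟩, by simp⟩,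
      h, ⟨hξ.1, hξ.2.trans_lt (by norm_num)⟩, by simp⟩
    simp [← List.length_pos_iff]
  · rintro ⟨l, hξ⟩
    exact ⟨cfCylinder_subset_Ioc l.1.2.1 l.1.2.2 hξ, hξ.1⟩

lemma AdmissibleWord.length_eq {l : AdmissibleWord} {i : ℕ} (h : l.1.length - 1 = i) :
    l.1.length = i + 1 := by
  have := List.length_pos_iff.2 l.2.2
  omega

lemma pairwise_disjoint_cfCylinder (i : ℕ) :
    Pairwise fun l m : {l : AdmissibleWord // l.1.length - 1 = i} =>
      Disjoint (cfCylinder l.1.1) (cfCylinder m.1.1) := by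
  intro l m hlm
  refine disjoint_left.2 fun ξ hl hm => hlm ?_
  have hlen : l.1.1.length = m.1.1.length :=
    (AdmissibleWord.length_eq l.2).trans (AdmissibleWord.length_eq m.2).symm
  exact Subtype.ext <| Subtype.ext <| hl.2.2.symm.trans (hlen ▸ hm.2.2)

lemma StrictAntiOn.mem_uIoo_iff {α β : Type*} [LinearOrder α] [LinearOrder β] {f : α → β}
    {s : Set α} (hf : StrictAntiOn f s) {x u v : α} (hx : x ∈ s) (hu : u ∈ s) (hv : v ∈ s) :
    f x ∈ uIoo (f u) (f v) ↔ x ∈ uIoo u v := by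
  rcases le_total u v with h | h
  · rw [uIoo_of_le h, uIoo_of_ge (hf.antitoneOn hu hv h), mem_Ioo, mem_Ioo,
      hf.lt_iff_gt hv hx, hf.lt_iff_gt hx hu, and_comm]
  · rw [uIoo_of_ge h, uIoo_of_le (hf.antitoneOn hv hu h), mem_Ioo, mem_Ioo,
      hf.lt_iff_gt hu hx, hf.lt_iff_gt hx hv, and_comm]

lemma floor_toNat_eq_and_fract_mem_iff {S : Set ℝ} (hS : S ⊆ Ioo 0 1) {a : ℕ} {y : ℝ} :
    (0 ≤ y ∧ ⌊y⌋.toNat = a ∧ Int.fract y ∈ S) ↔ y - a ∈ S := by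
  constructor
  · rintro ⟨hy, ha, hS⟩
    rwa [Int.fract, ← Int.toNat_of_nonneg (Int.floor_nonneg.2 hy), ha] at hS
  · intro h
    obtain ⟨h0, h1⟩ := hS h
    have hfloor : ⌊y⌋ = a := by rw [Int.floor_eq_iff]; push_cast; constructor <;> linarith
    refine ⟨by linarith [a.cast_nonneg (α := ℝ)], by simp [hfloor], ?_⟩
    rwa [Int.fract, hfloor, Int.cast_natCast]

/-- Inverse branch `x ↦ 1 / (a + x)` of the Gauss map on the interval with `a₁ = a`. -/
lemma mem_Ioo_and_gaussMap_mem_uIoo_iff {a : ℕ} (ha : 1 ≤ a) {u v : ℝ} (hu : u ∈ Icc 0 1)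
    (hv : v ∈ Icc 0 1) {ξ : ℝ} :
    (ξ ∈ Ioo 0 1 ∧ ⌊ξ⁻¹⌋.toNat = a ∧ gaussMap ξ ∈ uIoo u v) ↔
      ξ ∈ uIoo (a + u)⁻¹ (a + v)⁻¹ := by
  have ha' : (1 : ℝ) ≤ a := by exact_mod_cast ha
  have hanti : StrictAntiOn (fun x : ℝ => (a + x)⁻¹) (Ioi (-a)) := fun x hx y _ hxy =>
    inv_strictAnti₀ (by simp only [mem_Ioi] at hx; linarith) (by linarith)
  have hu' : u ∈ Ioi (-(a : ℝ)) := by simp only [mem_Ioi]; linarith [hu.1]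
  have hv' : v ∈ Ioi (-(a : ℝ)) := by simp only [mem_Ioi]; linarith [hv.1]
  have hS := uIoo_subset_Ioo hu hv
  suffices h : 0 < ξ → ((ξ < 1 ∧ ⌊ξ⁻¹⌋.toNat = a ∧ gaussMap ξ ∈ uIoo u v) ↔
      ξ⁻¹ - a ∈ uIoo u v) by
    constructor
    · rintro ⟨hξ, hrest⟩
      have hx : ξ⁻¹ - a ∈ Ioi (-(a : ℝ)) := by simp [hξ.1]
      simpa using (hanti.mem_uIoo_iff hx hu' hv').2 ((h hξ.1).1 ⟨hξ.2, hrest⟩)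
    · intro hξ
      have hpos : 0 < ξ := by
        refine lt_trans ?_ hξ.1
        simp only [lt_inf_iff]
        constructor <;> apply inv_pos.2 <;> linarith [hu.1, hv.1]
      have hx : ξ⁻¹ - a ∈ Ioi (-(a : ℝ)) := by simp [hpos]
      obtain ⟨hlt, hrest⟩ := (h hpos).2 ((hanti.mem_uIoo_iff hx hu' hv').1 (by simpa using hξ))
      exact ⟨⟨hpos, hlt⟩, hrest⟩
  intro hξ
  rw [← floor_toNat_eq_and_fract_mem_iff hS, gaussMap]
  constructor
  · rintro ⟨-, hrest⟩
    exact ⟨inv_nonneg.2 hξ.le, hrest⟩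
  · rintro ⟨hy, hrest⟩
    refine ⟨?_, hrest⟩
    have := (hS ((floor_toNat_eq_and_fract_mem_iff hS).1 ⟨hy, hrest⟩)).1
    rw [← one_lt_inv₀ hξ]
    linarith

theorem cfCylinder_eq {l : List ℕ} (h : ∀ a ∈ l, 1 ≤ a) :
    cfCylinder l = {ξ | Irrational ξ} ∩ uIoo (leftEnd l) (rightEnd l) := by
  induction l with
  | nil =>
    ext ξ
    simp [cfCylinder, partQuots, leftEnd, rightEnd]
  | cons a t ih =>
    simp only [List.mem_cons, forall_eq_or_imp] at h
    ext ξ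
    rw [mem_cfCylinder_cons, ih h.2, leftEnd_cons a h.2, rightEnd_cons a h.2, mem_inter_iff,
      mem_inter_iff, mem_ofPred_eq, mem_ofPred_eq, irrational_gaussMap_iff,
      ← mem_Ioo_and_gaussMap_mem_uIoo_iff h.1 (leftEnd_mem_Icc h.2) (rightEnd_mem_Icc h.2)]
    tauto

lemma measurableSet_cfCylinder {l : List ℕ} (h : ∀ a ∈ l, 1 ≤ a) :
    MeasurableSet (cfCylinder l) := by
  rw [cfCylinder_eq h]
  refine MeasurableSet.inter ?_ measurableSet_Ioo
  have : {ξ : ℝ | Irrational ξ} = (range ((↑) : ℚ → ℝ))ᶜ := by ext; simp [Irrational]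
  exact this ▸ (countable_range _).measurableSet.compl

lemma irrationals_ae_eq_univ : {ξ : ℝ | Irrational ξ} =ᵐ[volume] univ :=
  Filter.eventuallyEq_univ.2 <| (countable_range ((↑) : ℚ → ℝ)).ae_notMem volume

/-- Lévy's lemma. -/
theorem volume_cfCylinder {l : List ℕ} (h : ∀ a ∈ l, 1 ≤ a) :
    volume (cfCylinder l) = ENNReal.ofReal (1 / ((denPrev l + den l) * den l)) := by
  rw [cfCylinder_eq h, measure_congr (inter_ae_eq_right_of_ae_eq_univ irrationals_ae_eq_univ),
    uIoo, Real.volume_Ioo, max_sub_min_eq_abs', abs_leftEnd_sub_rightEnd h]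

lemma measurable_gaussMap : Measurable gaussMap :=
  measurable_fract.comp measurable_inv

lemma measurable_partQuotN (k : ℕ) : Measurable fun ξ => partQuotN ξ k :=
  (measurable_of_countable Int.toNat).comp
    (Int.measurable_floor.comp (measurable_inv.comp (measurable_gaussMap.iterate k)))

lemma measurable_convDen : ∀ n : ℕ, Measurable fun ξ => convDen ξ n
  | 0 => measurable_const
  | 1 => measurable_partQuotN 0
  | n + 2 =>
    ((measurable_partQuotN (n + 1)).mul (measurable_convDen (n + 1))).add (measurable_convDen n)

lemma convDen_eq_of_mem_cfCylinder {ξ : ℝ} {l : List ℕ} {n : ℕ} (hξ : ξ ∈ cfCylinder l)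
    (hl : l.length = n + 1) : convDen ξ n = denPrev l ∧ convDen ξ (n + 1) = den l := by
  obtain ⟨hden, hprev⟩ := den_partQuots ξ n
  rw [← hl, hξ.2.2] at hden hprev
  exact ⟨hprev.symm, hl ▸ hden.symm⟩

lemma setLIntegral_Ioc_convDen (g : ℕ → ℕ → ENNReal) (i : ℕ) :
    ∫⁻ ξ in Ioc 0 (1 / 2), g (convDen ξ i) (convDen ξ (i + 1)) =
      ∑' l : {l : AdmissibleWord // l.1.length - 1 = i},
        g (denPrev l.1.1) (den l.1.1) * volume (cfCylinder l.1.1) := by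
  rw [← setLIntegral_congr (inter_ae_eq_left_of_ae_eq_univ irrationals_ae_eq_univ),
    Ioc_inter_irrational_eq_iUnion_cfCylinder i,
    lintegral_iUnion (fun l => measurableSet_cfCylinder l.1.2.1.1)
      (pairwise_disjoint_cfCylinder i)]
  refine tsum_congr fun l => ?_
  rw [← setLIntegral_const]
  refine setLIntegral_congr_fun (measurableSet_cfCylinder l.1.2.1.1) fun ξ hξ => ?_
  obtain ⟨hprev, hden⟩ := convDen_eq_of_mem_cfCylinder hξ (AdmissibleWord.length_eq l.2)
  rw [hprev, hden]

theorem tsum_setLIntegral_Ioc_convDen (g : ℕ → ℕ → ENNReal) :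
    ∑' i, ∫⁻ ξ in Ioc 0 (1 / 2), g (convDen ξ i) (convDen ξ (i + 1)) =
      ∑' x : CoprimePairs,
        g x.1.1 x.1.2 * ENNReal.ofReal (1 / (((x.1.1 : ℝ) + x.1.2) * x.1.2)) := by
  rw [← (Equiv.ofBijective _ toCoprimePair_bijective).tsum_eq,
    ← (Equiv.sigmaFiberEquiv fun l : AdmissibleWord => l.1.length - 1).tsum_eq,
    ENNReal.tsum_sigma']
  refine tsum_congr fun i => ?_
  rw [setLIntegral_Ioc_convDen]
  refine tsum_congr fun l => ?_
  rw [volume_cfCylinder l.1.2.1.1]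
  rfl

theorem integrable_tsum_of_tsum_lintegral_eq_ofReal {ι α : Type*} [Countable ι]
    [MeasurableSpace α] {μ : Measure α} {f : ι → α → ℝ} (hf : ∀ i, Measurable (f i))
    (hf0 : ∀ i x, 0 ≤ f i x) {T : ℝ} (hT : 0 ≤ T)
    (h : ∑' i, ∫⁻ x, ENNReal.ofReal (f i x) ∂μ = ENNReal.ofReal T) :
    Integrable (fun x => ∑' i, f i x) μ ∧ ∫ x, ∑' i, f i x ∂μ = T := by
  set G : α → ENNReal := fun x => ∑' i, ENNReal.ofReal (f i x)
  have hG : Measurable G := Measurable.tsum fun i => (hf i).ennreal_ofReal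
  have hGint : ∫⁻ x, G x ∂μ = ENNReal.ofReal T := by
    rw [lintegral_tsum fun i => (hf i).ennreal_ofReal.aemeasurable, h]
  have hGfin : ∫⁻ x, G x ∂μ ≠ ⊤ := hGint ▸ ENNReal.ofReal_ne_top
  have hsum : (fun x => ∑' i, f i x) = fun x => (G x).toReal := by
    ext x
    rw [ENNReal.tsum_toReal_eq fun _ => ENNReal.ofReal_ne_top]
    simp only [ENNReal.toReal_ofReal (hf0 _ x)]
  rw [hsum]
  refine ⟨integrable_toReal_of_lintegral_ne_top hG.aemeasurable hGfin, ?_⟩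
  rw [integral_toReal hG.aemeasurable (ae_lt_top hG hGfin), hGint, ENNReal.toReal_ofReal hT]

/-- if `r ≥ 0` and `∑_{(p,q)} r(p,q)/((p+q)q) < ∞`, then the
Lévy function `l_r` is integrable on `(0,1/2]` and
`∫_0^{1/2} l_r(ξ) dξ = ∑_{(p,q)} r(p,q)/((p+q)q)`. -/
theorem stmt10 (r : ℕ → ℕ → ℝ) (hr : ∀ p q : ℕ, 0 ≤ r p q)
    (hsum : Summable fun x : CoprimePairs =>
      r x.1.1 x.1.2 / (((x.1.1 : ℝ) + x.1.2) * x.1.2)) :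
    IntegrableOn (levyFn r) (Set.Ioc (0 : ℝ) (1 / 2)) volume ∧
    ∫ ξ in Set.Ioc (0 : ℝ) (1 / 2), levyFn r ξ =
      ∑' x : CoprimePairs, r x.1.1 x.1.2 / (((x.1.1 : ℝ) + x.1.2) * x.1.2) := by
  have hterm (x : CoprimePairs) : 0 ≤ r x.1.1 x.1.2 / (((x.1.1 : ℝ) + x.1.2) * x.1.2) :=
    div_nonneg (hr _ _) (by positivity)
  refine integrable_tsum_of_tsum_lintegral_eq_ofReal
    (f := fun i ξ => r (convDen ξ i) (convDen ξ (i + 1)))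
    (fun i => (measurable_of_countable fun n : ℕ × ℕ => r n.1 n.2).comp
      ((measurable_convDen i).prodMk (measurable_convDen (i + 1))))
    (fun _ _ => hr _ _) (tsum_nonneg hterm) ?_
  rw [tsum_setLIntegral_Ioc_convDen fun p q => ENNReal.ofReal (r p q),
    ENNReal.ofReal_tsum_of_nonneg hterm hsum]
  refine tsum_congr fun x => ?_
  rw [← ENNReal.ofReal_mul (hr _ _), mul_one_div]
end

section
/- Let F₀ be a vector space of functions (e.g., functions holomorphic on ℂ ∖ (-∞,0]) carrying a right action |_s of the semigroup G⁺ (matrices [[a,b],[c,d]] with integer entries, positive determinant, b,d ≥ 0, and either a > 0 or a = 0, b > 0). Suppose ψ ∈ F₀ satisfies ψ|_s I = ψ|_s T + ψ|_s T', where T = [[1,1],[0,1]] and T' = [[1,0],[1,1]]. Define μ̃ on left primitive segments by μ̃(g⁻¹·∞, g⁻¹·0) := ψ|_s g for g ∈ S (the SL(2,ℤ)-matrices with nonnegative entries). Then whenever three left primitive segments satisfy (α,γ) = (α,β) ∪ (β,γ), one has μ̃(α,β) + μ̃(β,γ) = μ̃(α,γ). -/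
/-!
The segment `(g⁻¹∞, g⁻¹0)` of `g = !![a, b; c, d]` is `(-d/c, -b/a)`, so it records the two rows of
`g` as points of `P¹(ℚ)`; a nonnegative primitive integer vector is determined by its point. The
subdivision conditions therefore say that `g₁` and `g₃` share their bottom row, that the bottom row
of `g₂` is the top row of `g₁`, and that `g₂` and `g₃` share their top row. The determinant
conditions then force `g₁ = T g₃` and `g₂ = T' g₃`, and the claim is the three-term relation acted
on by `g₃`.
-/

/-- Fractional linear action of an integer 2×2 matrix on `P¹(ℚ) = ℚ ∪ {∞}`,
with `∞` encoded as `none`. -/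
def flin (h : Matrix (Fin 2) (Fin 2) ℤ) : Option ℚ → Option ℚ
  | none => if (h 1 0 : ℚ) = 0 then none else some ((h 0 0 : ℚ) / (h 1 0 : ℚ))
  | some x => if (h 1 0 : ℚ) * x + (h 1 1 : ℚ) = 0 then none
      else some (((h 0 0 : ℚ) * x + (h 0 1 : ℚ)) / ((h 1 0 : ℚ) * x + (h 1 1 : ℚ)))

/-- The semigroup `G⁺`: integer matrices with positive determinant,
`b, d ≥ 0`, and either `a > 0`, or `a = 0` and `b > 0`. -/
def Gplus : Set (Matrix (Fin 2) (Fin 2) ℤ) :=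
  {g | 0 < g.det ∧ 0 ≤ g 0 1 ∧ 0 ≤ g 1 1 ∧ (0 < g 0 0 ∨ (g 0 0 = 0 ∧ 0 < g 0 1))}

def Tmat : Matrix (Fin 2) (Fin 2) ℤ := !![1, 1; 0, 1]

def Tmat' : Matrix (Fin 2) (Fin 2) ℤ := !![1, 0; 1, 1]

open Matrix.SpecialLinearGroup
open scoped MatrixGroups

/-- The point `[x : y]` of `P¹(ℚ)`, encoded as in `flin`. -/
def projPoint (x y : ℤ) : Option ℚ := if (y : ℚ) = 0 then none else some (x / y)

theorem mul_eq_mul_of_projPoint_eq {x y x' y' : ℤ} (h : projPoint x y = projPoint x' y') :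
    x * y' = x' * y := by
  unfold projPoint at h
  split_ifs at h with hy hy' hy'
  · simp_all
  · rw [Option.some.injEq, div_eq_div_iff hy hy'] at h
    exact_mod_cast h

theorem flin_inv_none (g : SL(2, ℤ)) : flin (g⁻¹).1 none = projPoint (g 1 1) (-g 1 0) := by
  simp [flin, projPoint, coe_inv, Matrix.adjugate_fin_two]

theorem flin_inv_zero (g : SL(2, ℤ)) : flin (g⁻¹).1 (some 0) = projPoint (-g 0 1) (g 0 0) := by
  simp [flin, projPoint, coe_inv, Matrix.adjugate_fin_two]

theorem eq_and_eq_of_isCoprime_of_mul_eq_mul {p q r s : ℤ} (hp : 0 ≤ p) (hq : 0 ≤ q)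
    (hr : 0 ≤ r) (hs : 0 ≤ s) (hpq : IsCoprime p q) (hrs : IsCoprime r s) (h : p * s = r * q) :
    p = r ∧ q = s := by
  obtain rfl : p = r := Int.dvd_antisymm hp hr
    (hpq.dvd_of_dvd_mul_right (h ▸ dvd_mul_right p s))
    (hrs.dvd_of_dvd_mul_right (h ▸ dvd_mul_right r q))
  rcases eq_or_ne p 0 with rfl | hp0
  · rw [isCoprime_zero_left, Int.isUnit_iff] at hpq hrs
    omega
  · exact ⟨rfl, (mul_left_cancel₀ hp0 h).symm⟩

theorem det_fin_two_eq_one (g : SL(2, ℤ)) : g 0 0 * g 1 1 - g 0 1 * g 1 0 = 1 := by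
  rw [← Matrix.det_fin_two]; exact g.det_coe

theorem zero_zero_pos_of_nonneg {g : SL(2, ℤ)} (hg : ∀ i j, 0 ≤ g i j) : 0 < g 0 0 := by
  nlinarith [det_fin_two_eq_one g, mul_nonneg (hg 0 1) (hg 1 0), hg 0 0, hg 1 1]

theorem coe_mem_Gplus_of_nonneg {g : SL(2, ℤ)} (hg : ∀ i j, 0 ≤ g i j) : g.1 ∈ Gplus :=
  ⟨by simp, hg 0 1, hg 1 1, Or.inl (zero_zero_pos_of_nonneg hg)⟩

theorem Tmat_mem_Gplus : Tmat ∈ Gplus := by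
  refine ⟨?_, ?_, ?_, ?_⟩ <;> simp [Tmat, Matrix.det_fin_two]

theorem Tmat'_mem_Gplus : Tmat' ∈ Gplus := by
  refine ⟨?_, ?_, ?_, ?_⟩ <;> simp [Tmat', Matrix.det_fin_two]

theorem eq_Tmat_mul_and_eq_Tmat'_mul_of_flin_eq {g₁ g₂ g₃ : SL(2, ℤ)}
    (hg₁ : ∀ i j, 0 ≤ g₁ i j) (hg₂ : ∀ i j, 0 ≤ g₂ i j) (hg₃ : ∀ i j, 0 ≤ g₃ i j)
    (hα : flin (g₁⁻¹).1 none = flin (g₃⁻¹).1 none)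
    (hβ : flin (g₁⁻¹).1 (some 0) = flin (g₂⁻¹).1 none)
    (hγ : flin (g₂⁻¹).1 (some 0) = flin (g₃⁻¹).1 (some 0)) :
    g₁.1 = Tmat * g₃ ∧ g₂.1 = Tmat' * g₃ := by
  rw [flin_inv_none, flin_inv_none] at hα
  rw [flin_inv_zero, flin_inv_none] at hβ
  rw [flin_inv_zero, flin_inv_zero] at hγ
  obtain ⟨hc₁, hd₁⟩ := eq_and_eq_of_isCoprime_of_mul_eq_mul (hg₁ 1 0) (hg₁ 1 1) (hg₃ 1 0)
    (hg₃ 1 1) (g₁.isCoprime_row 1) (g₃.isCoprime_row 1)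
    (by linear_combination mul_eq_mul_of_projPoint_eq hα)
  obtain ⟨hc₂, hd₂⟩ := eq_and_eq_of_isCoprime_of_mul_eq_mul (hg₂ 1 0) (hg₂ 1 1) (hg₁ 0 0)
    (hg₁ 0 1) (g₂.isCoprime_row 1) (g₁.isCoprime_row 0)
    (by linear_combination mul_eq_mul_of_projPoint_eq hβ)
  obtain ⟨ha₂, hb₂⟩ := eq_and_eq_of_isCoprime_of_mul_eq_mul (hg₂ 0 0) (hg₂ 0 1) (hg₃ 0 0)
    (hg₃ 0 1) (g₂.isCoprime_row 0) (g₃.isCoprime_row 0)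
    (by linear_combination mul_eq_mul_of_projPoint_eq hγ)
  have det₁ := det_fin_two_eq_one g₁
  have det₂ := det_fin_two_eq_one g₂
  have det₃ := det_fin_two_eq_one g₃
  rw [hc₁, hd₁] at det₁
  rw [hc₂, hd₂, ha₂, hb₂] at det₂
  -- the top row of `g₁` solves a linear system whose determinant is `det g₃ = 1`
  have ha₁ : g₁ 0 0 = g₃ 0 0 + g₃ 1 0 := by
    linear_combination g₃ 0 0 * det₁ + g₃ 1 0 * det₂ - g₁ 0 0 * det₃
  have hb₁ : g₁ 0 1 = g₃ 0 1 + g₃ 1 1 := by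
    linear_combination g₃ 0 1 * det₁ + g₃ 1 1 * det₂ - g₁ 0 1 * det₃
  constructor
  · rw [Matrix.eta_fin_two g₁.1, Matrix.eta_fin_two g₃.1, Tmat, Matrix.mul_fin_two]
    simp [ha₁, hb₁, hc₁, hd₁]
  · rw [Matrix.eta_fin_two g₂.1, Matrix.eta_fin_two g₃.1, Tmat', Matrix.mul_fin_two]
    simp [ha₁, hb₁, ha₂, hb₂, hc₂, hd₂]

theorem stmt12_general {F₀ : Type*} [AddCommGroup F₀]
    (act : F₀ → Matrix (Fin 2) (Fin 2) ℤ → F₀)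
    (hassoc : ∀ (f : F₀) (g₁ g₂ : Matrix (Fin 2) (Fin 2) ℤ),
      g₁ ∈ Gplus → g₂ ∈ Gplus → act f (g₁ * g₂) = act (act f g₁) g₂)
    (hadd : ∀ (f₁ f₂ : F₀) (g : Matrix (Fin 2) (Fin 2) ℤ), g ∈ Gplus →
      act (f₁ + f₂) g = act f₁ g + act f₂ g)
    (ψ : F₀) (hψ : act ψ 1 = act ψ Tmat + act ψ Tmat')
    (hψI : act ψ 1 = ψ)
    (g₁ g₂ g₃ : Matrix.SpecialLinearGroup (Fin 2) ℤ)
    (hg₁ : ∀ i j, 0 ≤ g₁.1 i j) (hg₂ : ∀ i j, 0 ≤ g₂.1 i j)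
    (hg₃ : ∀ i j, 0 ≤ g₃.1 i j)
    -- the segments `(α,β)`, `(β,γ)`, `(α,γ)` associated to `g₁, g₂, g₃`
    -- satisfy `(α,γ) = (α,β) ∪ (β,γ)`:
    (hα : flin (g₁⁻¹).1 none = flin (g₃⁻¹).1 none)
    (hβ : flin (g₁⁻¹).1 (some 0) = flin (g₂⁻¹).1 none)
    (hγ : flin (g₂⁻¹).1 (some 0) = flin (g₃⁻¹).1 (some 0)) :
    act ψ g₁.1 + act ψ g₂.1 = act ψ g₃.1 := by
  obtain ⟨h₁, h₂⟩ := eq_Tmat_mul_and_eq_Tmat'_mul_of_flin_eq hg₁ hg₂ hg₃ hα hβ hγ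
  have hg₃G := coe_mem_Gplus_of_nonneg hg₃
  rw [h₁, h₂, hassoc ψ _ _ Tmat_mem_Gplus hg₃G, hassoc ψ _ _ Tmat'_mem_Gplus hg₃G,
    ← hadd _ _ _ hg₃G, ← hψ, hψI]

/-- let `F₀` be a complex vector space with a right action `act`
of `G⁺` (additive in the function argument, associative on `G⁺`), and let
`ψ ∈ F₀` satisfy the three-term relation `ψ|I = ψ|T + ψ|T'`.  Define `μ̃` on
left primitive segments by `μ̃(g⁻¹∞, g⁻¹0) = ψ|g` for `g ∈ S` (nonnegative
`SL(2,ℤ)`-matrices).  If three left primitive segments satisfy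
`(α,γ) = (α,β) ∪ (β,γ)`, then `μ̃(α,β) + μ̃(β,γ) = μ̃(α,γ)`. -/
theorem stmt12 {F₀ : Type*} [AddCommGroup F₀] [Module ℂ F₀]
    (act : F₀ → Matrix (Fin 2) (Fin 2) ℤ → F₀)
    (hassoc : ∀ (f : F₀) (g₁ g₂ : Matrix (Fin 2) (Fin 2) ℤ),
      g₁ ∈ Gplus → g₂ ∈ Gplus → act f (g₁ * g₂) = act (act f g₁) g₂)
    (hadd : ∀ (f₁ f₂ : F₀) (g : Matrix (Fin 2) (Fin 2) ℤ), g ∈ Gplus →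
      act (f₁ + f₂) g = act f₁ g + act f₂ g)
    (ψ : F₀) (hψ : act ψ 1 = act ψ Tmat + act ψ Tmat')
    (hψI : act ψ 1 = ψ)
    (g₁ g₂ g₃ : Matrix.SpecialLinearGroup (Fin 2) ℤ)
    (hg₁ : ∀ i j, 0 ≤ g₁.1 i j) (hg₂ : ∀ i j, 0 ≤ g₂.1 i j)
    (hg₃ : ∀ i j, 0 ≤ g₃.1 i j)
    -- the segments `(α,β)`, `(β,γ)`, `(α,γ)` associated to `g₁, g₂, g₃`
    -- satisfy `(α,γ) = (α,β) ∪ (β,γ)`: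
    (hα : flin (g₁⁻¹).1 none = flin (g₃⁻¹).1 none)
    (hβ : flin (g₁⁻¹).1 (some 0) = flin (g₂⁻¹).1 none)
    (hγ : flin (g₂⁻¹).1 (some 0) = flin (g₃⁻¹).1 (some 0)) :
    act ψ g₁.1 + act ψ g₂.1 = act ψ g₃.1 :=
  stmt12_general act hassoc hadd ψ hψ hψI g₁ g₂ g₃ hg₁ hg₂ hg₃ hα hβ hγ
end
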